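/- Let φ ∈ Aut(𝔸²) and p ∈ k̄² be such that the Zariski closure Δ̄ of O_φ(p) is infinite and not all of k̄² (i.e. Δ̄ is a curve), and let ℓ be the number of irreducible components of Δ̄. Then the irreducible components of Δ̄ can be labeled C₁, …, C_ℓ with p ∈ C₁ so that φ(C_i) = C_{i+1} for 1 ≤ i < ℓ and φ(C_ℓ) = C₁, and moreover C_i equals the Zariski closure of O_{φ^ℓ}(φ^{i−1}(p)) for each i = 1, …, ℓ. Furthermore, the number of irreducible components of Δ̂ — the zero locus in k̄² of the ideal I_k(O_φ(p)) of k-polynomials vanishing on O_φ(p) — is a multiple of ℓ, and every irreducible component of Δ̂ is the image of some C_i under the coordinatewise action of an element of Gal(k̄/k). -/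

import Mathlib

open MvPolynomial

noncomputable section

/-- Points of the affine plane over the algebraic closure of `k`. -/
abbrev Pt (k : Type*) [Field k] : Type _ := Fin 2 → AlgebraicClosure k

/-- Plane automorphisms over `k`, modeled as `k`-algebra automorphisms of `k[x,y]`. -/
abbrev PlaneAut (k : Type*) [Field k] : Type _ :=
  MvPolynomial (Fin 2) k ≃ₐ[k] MvPolynomial (Fin 2) k

/-- The embedding of `k` in its algebraic closure. -/
abbrev emb (k : Type*) [Field k] : k →+* AlgebraicClosure k :=
  algebraMap k (AlgebraicClosure k)

variable {k : Type*} [Field k]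

/-- The action of a plane automorphism on the points of the plane over `k̄`:
the point map of `φ` is `q ↦ (f(q), g(q))` where `f = φ.symm X₀`, `g = φ.symm X₁`
(so that `actp` is a left action of the automorphism group on points). -/
def actp (φ : PlaneAut k) (q : Pt k) : Pt k :=
  fun i => aeval q (φ.symm (X i))

/-- The Zariski closure of a set of points of `k̄²`: the zero locus of the ideal of all
polynomials with coefficients in `k̄` vanishing on it. -/
def zclos (Δ : Set (Pt k)) : Set (Pt k) :=
  zeroLocus (AlgebraicClosure k) (vanishingIdeal (k := AlgebraicClosure k) Δ)

/-- `Δ̂` : the zero locus in `k̄²` of the ideal `I_k(Δ)` of all polynomials with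
coefficients in `k` vanishing on `Δ`. -/
def hatSet (Δ : Set (Pt k)) : Set (Pt k) :=
  {q | ∀ P : MvPolynomial (Fin 2) k, (∀ x ∈ Δ, aeval x P = 0) → aeval q P = 0}

/-- Coordinatewise action of the Galois group `Gal(k̄/k)` on points of `k̄²`. -/
def galAct (g : AlgebraicClosure k ≃ₐ[k] AlgebraicClosure k) (q : Pt k) : Pt k :=
  fun i => g (q i)

/-- A subset of `k̄²` is Zariski closed iff it is the zero locus of an ideal of `k̄[x,y]`. -/
def IsZClosed (S : Set (Pt k)) : Prop :=
  ∃ I : Ideal (MvPolynomial (Fin 2) (AlgebraicClosure k)), S = zeroLocus (AlgebraicClosure k) I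

/-- Irreducibility with respect to the Zariski topology on `k̄²`. -/
def IsZIrreducible (S : Set (Pt k)) : Prop :=
  S.Nonempty ∧ ∀ Z₁ Z₂ : Set (Pt k), IsZClosed Z₁ → IsZClosed Z₂ → S ⊆ Z₁ ∪ Z₂ →
    (S ⊆ Z₁ ∨ S ⊆ Z₂)

/-- `C` is an irreducible component of `S` (for the Zariski topology on `k̄²`):
a maximal irreducible subset of `S`. -/
def IsIrredComponentOf (C S : Set (Pt k)) : Prop :=
  IsZIrreducible C ∧ C ⊆ S ∧ ∀ C' : Set (Pt k), IsZIrreducible C' → C' ⊆ S → C ⊆ C' → C = C'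

/-- The stabilizer `Aut(𝔸², Δ)` of a set of points of `k̄²`, as a set of plane automorphisms. -/
def stabSet (Δ : Set (Pt k)) : Set (PlaneAut k) :=
  {φ | actp φ '' Δ = Δ}

/-- The orbit `O_H(p)` of a point under a subgroup of plane automorphisms. -/
def orbSub (H : Subgroup (PlaneAut k)) (p : Pt k) : Set (Pt k) :=
  {q | ∃ h ∈ H, actp h p = q}

/-- The orbit `O_φ(p) = {φⁿ(p) : n ∈ ℤ}` of a point under a single plane automorphism. -/
def orbAut (φ : PlaneAut k) (p : Pt k) : Set (Pt k) :=
  {q | ∃ n : ℤ, actp (φ ^ n) p = q}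

/-- The degree of a plane automorphism: the maximum of the total degrees of the two
polynomials giving its point map. -/
def autDegree (φ : PlaneAut k) : ℕ :=
  max (φ.symm (X 0)).totalDegree (φ.symm (X 1)).totalDegree

/-- The torus `T = {(x,y) ↦ (t·x, t⁻¹·y) : t ∈ k*}`, as a set of plane automorphisms. -/
def torusT (k : Type*) [Field k] : Set (PlaneAut k) :=
  {φ | ∃ t : k, t ≠ 0 ∧ ∀ q : Pt k, actp φ q = ![emb k t * q 0, (emb k t)⁻¹ * q 1]}

end


/-!
The plane automorphisms act on `k̄²` by homeomorphisms of the Zariski topology, which is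
Noetherian, so `φ` permutes the finitely many irreducible components of `Δ̄`. Let `C₀` be a
component through `p` and `ℓ` its period under `φ`. The translates `φ^i C₀`, `i < ℓ`, are
distinct components, `φ^i C₀` contains the closure of `O_{φ^ℓ}(φ^i p)`, and these `ℓ` orbit
closures already cover `Δ̄`; hence the `φ^i C₀` are all the components and each equals its orbit
closure.

Since `k` is perfect, the product of the Galois conjugates of a polynomial is defined over `k`;
with prime avoidance this gives `Δ̂ = ⋃_σ σ(Δ̄)`. A closed set has only finitely many Galois
translates, so every component of `Δ̂` is some `σ(φ^i C₀)`. As `φ` commutes with the Galois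
action, it permutes the components of `Δ̂` with all orbits of length exactly `ℓ`, whence
`ℓ` divides their number.
-/

open Topology TopologicalSpace Pointwise MulAction

section IrreducibleComponentsOf

variable {X : Type*} [TopologicalSpace X]

def irreducibleComponentsOf (S : Set X) : Set (Set X) :=
  {C | Maximal (fun C => IsIrreducible C ∧ C ⊆ S) C}

variable {S C T : Set X} {𝒵 : Set (Set X)}

theorem IsIrreducible.exists_subset_of_subset_sUnion (hT : IsIrreducible T) (h𝒵 : 𝒵.Finite)
    (hclosed : ∀ Z ∈ 𝒵, IsClosed Z) (hsub : T ⊆ ⋃₀ 𝒵) : ∃ Z ∈ 𝒵, T ⊆ Z := by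
  lift 𝒵 to Finset (Set X) using h𝒵
  exact isIrreducible_iff_sUnion_isClosed.1 hT 𝒵 hclosed hsub

theorem mem_of_mem_irreducibleComponentsOf (h𝒵 : 𝒵.Finite) (hclosed : ∀ Z ∈ 𝒵, IsClosed Z)
    (hirr : ∀ Z ∈ 𝒵, IsIrreducible Z ∧ Z ⊆ S) (hcov : S ⊆ ⋃₀ 𝒵)
    (hC : C ∈ irreducibleComponentsOf S) : C ∈ 𝒵 := by
  obtain ⟨Z, hZ, hCZ⟩ := hC.1.1.exists_subset_of_subset_sUnion h𝒵 hclosed (hC.1.2.trans hcov)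
  exact (hC.2 (hirr Z hZ) hCZ).antisymm hCZ ▸ hZ

theorem isClosed_of_mem_irreducibleComponentsOf (hS : IsClosed S)
    (hC : C ∈ irreducibleComponentsOf S) : IsClosed C :=
  closure_subset_iff_isClosed.1 <|
    hC.2 ⟨isIrreducible_iff_closure.2 hC.1.1, closure_minimal hC.1.2 hS⟩ subset_closure

theorem smul_mem_irreducibleComponentsOf {G : Type*} [Group G] [MulAction G X]
    [ContinuousConstSMul G X] (g : G) (hC : C ∈ irreducibleComponentsOf S) :
    g • C ∈ irreducibleComponentsOf (g • S) := by
  refine ⟨⟨hC.1.1.image _ (continuous_const_smul g).continuousOn, Set.smul_set_mono hC.1.2⟩,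
    fun E hE hCE => ?_⟩
  have hE' : IsIrreducible (g⁻¹ • E) ∧ g⁻¹ • E ⊆ S :=
    ⟨hE.1.image _ (continuous_const_smul _).continuousOn,
      Set.subset_smul_set_iff.1 hE.2⟩
  exact Set.subset_smul_set_iff.2 (hC.2 hE' (Set.smul_set_subset_iff_subset_inv_smul_set.1 hCE))

variable [NoetherianSpace X]

theorem IsClosed.finite_irreducibleComponentsOf (hS : IsClosed S) :
    (irreducibleComponentsOf S).Finite := by
  obtain ⟨𝒵, h𝒵, hclosed, hirr, rfl⟩ := NoetherianSpace.exists_finite_set_isClosed_irreducible hS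
  exact h𝒵.subset fun C hC => mem_of_mem_irreducibleComponentsOf h𝒵 hclosed
    (fun Z hZ => ⟨hirr Z hZ, Set.subset_sUnion_of_mem hZ⟩) subset_rfl hC

theorem IsClosed.exists_mem_irreducibleComponentsOf (hS : IsClosed S) {x : X} (hx : x ∈ S) :
    ∃ C ∈ irreducibleComponentsOf S, x ∈ C := by
  obtain ⟨𝒵, h𝒵, hclosed, hirr, rfl⟩ := NoetherianSpace.exists_finite_set_isClosed_irreducible hS
  obtain ⟨Z, hZ, hxZ⟩ := Set.mem_sUnion.1 hx
  obtain ⟨C, hZC, hC⟩ := h𝒵.exists_le_maximal hZ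
  refine ⟨C, ⟨⟨hirr C hC.1, Set.subset_sUnion_of_mem hC.1⟩, fun E hE hCE => ?_⟩, hZC hxZ⟩
  obtain ⟨Z', hZ', hEZ'⟩ := hE.1.exists_subset_of_subset_sUnion h𝒵 hclosed hE.2
  exact hEZ'.trans (hC.2 hZ' (hCE.trans hEZ'))

end IrreducibleComponentsOf

theorem Set.Finite.dvd_ncard_of_forall_minimalPeriod_eq {α : Type*} {f : α → α} {T : Set α}
    {ℓ : ℕ} (hT : T.Finite) (hf : Set.MapsTo f T T) (hℓ : 0 < ℓ)
    (hper : ∀ a ∈ T, Function.minimalPeriod f a = ℓ) : ℓ ∣ T.ncard := by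
  classical
  -- `T` is the disjoint union of the `f`-orbits of its points, each of size `ℓ`.
  lift T to Finset α using hT
  set orbit : α → Finset α := fun a => (Finset.range ℓ).image (f^[·] a)
  have card_orbit : ∀ a ∈ T, (orbit a).card = ℓ := fun a ha => by
    rw [Finset.card_image_of_injOn, Finset.card_range]
    simpa [← hper a ha] using Function.iterate_injOn_Iio_minimalPeriod (f := f) (x := a)
  have orbit_subset : ∀ a ∈ T, orbit a ⊆ T := fun a ha => by
    simpa [orbit, Finset.image_subset_iff] using fun n _ => (hf.iterate n) ha
  have orbit_eq : ∀ a ∈ T, ∀ b ∈ orbit a, orbit b = orbit a := by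
    intro a ha b hb
    obtain ⟨n, -, rfl⟩ := Finset.mem_image.1 hb
    refine Finset.eq_of_subset_of_card_le (fun c hc => ?_)
      (by rw [card_orbit a ha, card_orbit _ (orbit_subset a ha hb)])
    obtain ⟨m, -, rfl⟩ := Finset.mem_image.1 hc
    rw [← Function.iterate_add_apply, ← Function.iterate_mod_minimalPeriod_eq, hper a ha]
    exact Finset.mem_image_of_mem _ (Finset.mem_range.2 (Nat.mod_lt _ hℓ))
  have self_mem_orbit : ∀ a, a ∈ orbit a := fun a =>
    Finset.mem_image.2 ⟨0, Finset.mem_range.2 hℓ, rfl⟩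
  rw [Set.ncard_coe_finset, Finset.card_eq_sum_card_image orbit T, Finset.sum_const_nat (m := ℓ)]
  · exact dvd_mul_left _ _
  · intro o ho
    obtain ⟨a, ha, rfl⟩ := Finset.mem_image.1 ho
    rw [← card_orbit a ha]
    congr 1
    ext b
    simp only [Finset.mem_filter]
    exact ⟨fun ⟨_, hb⟩ => hb ▸ self_mem_orbit b,
      fun hb => ⟨orbit_subset a ha hb, orbit_eq a ha b hb⟩⟩

theorem MulAction.period_eq_of_forall_pow_smul_eq_iff {M α : Type*} [Monoid M] [MulAction M α]
    {m : M} {a b : α} (h : ∀ n : ℕ, m ^ n • a = a ↔ m ^ n • b = b) : period m a = period m b :=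
  Nat.dvd_antisymm (pow_smul_eq_iff_period_dvd.1 ((h _).2 (pow_period_smul m b)))
    (pow_smul_eq_iff_period_dvd.1 ((h _).1 (pow_period_smul m a)))

theorem MulAction.pow_smul_injOn_Iio_period {M α : Type*} [Monoid M] [MulAction M α] (m : M)
    (a : α) : Set.InjOn (fun n : ℕ => m ^ n • a) (Set.Iio (period m a)) := by
  intro i hi j hj hij
  exact Function.iterate_injOn_Iio_minimalPeriod hi hj (by simpa only [smul_iterate] using hij)

section OrbitClosure

variable {G X : Type*} [Group G] [MulAction G X]

theorem zpow_smul_range_zpow_smul (φ : G) (p : X) (m : ℤ) :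
    φ ^ m • Set.range (fun n : ℤ => φ ^ n • p) = Set.range fun n : ℤ => φ ^ n • p := by
  rw [Set.smul_set_range]
  simp_rw [smul_smul, ← zpow_add]
  exact (Equiv.addLeft m).surjective.range_comp fun n => φ ^ n • p

variable [TopologicalSpace X]

def orbitClosure (φ : G) (p : X) : Set X :=
  closure (Set.range fun n : ℤ => φ ^ n • p)

theorem self_mem_orbitClosure (φ : G) (p : X) : p ∈ orbitClosure φ p :=
  subset_closure ⟨0, by simp⟩

theorem orbitClosure_eq_iUnion (φ : G) (p : X) {ℓ : ℕ} (hℓ : 0 < ℓ) :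
    orbitClosure φ p = ⋃ j : Fin ℓ, orbitClosure (φ ^ ℓ) (φ ^ (j : ℕ) • p) := by
  simp only [orbitClosure]
  rw [← closure_iUnion_of_finite]
  congr 1
  ext x
  simp only [Set.mem_range, Set.mem_iUnion, smul_smul, ← zpow_natCast, ← zpow_mul, ← zpow_add]
  constructor
  · rintro ⟨n, rfl⟩
    have hr : 0 ≤ n % ℓ := Int.emod_nonneg _ (by omega)
    have hrℓ : n % ℓ < ℓ := Int.emod_lt_of_pos _ (by omega)
    refine ⟨⟨(n % ℓ).toNat, by omega⟩, n / ℓ, ?_⟩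
    rw [Int.toNat_of_nonneg hr, Int.mul_ediv_add_emod]
  · rintro ⟨j, m, rfl⟩
    exact ⟨_, rfl⟩

variable [ContinuousConstSMul G X]

theorem zpow_smul_orbitClosure (φ : G) (p : X) (m : ℤ) :
    φ ^ m • orbitClosure φ p = orbitClosure φ p := by
  rw [orbitClosure, ← closure_smul, zpow_smul_range_zpow_smul]

variable {φ : G} {p : X} {C₀ : Set X}

theorem pow_smul_mem_irreducibleComponentsOf_orbitClosure
    (hC₀ : C₀ ∈ irreducibleComponentsOf (orbitClosure φ p)) (n : ℕ) :
    φ ^ n • C₀ ∈ irreducibleComponentsOf (orbitClosure φ p) := by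
  have h := smul_mem_irreducibleComponentsOf (φ ^ n) hC₀
  rwa [← zpow_natCast φ n, zpow_smul_orbitClosure, zpow_natCast] at h

theorem orbitClosure_pow_period_subset (hC₀ : C₀ ∈ irreducibleComponentsOf (orbitClosure φ p))
    (hp : p ∈ C₀) (j : ℕ) : orbitClosure (φ ^ period φ C₀) (φ ^ j • p) ⊆ φ ^ j • C₀ := by
  refine closure_minimal ?_ (isClosed_of_mem_irreducibleComponentsOf isClosed_closure
    (pow_smul_mem_irreducibleComponentsOf_orbitClosure hC₀ j))
  rintro _ ⟨m, rfl⟩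
  show (φ ^ period φ C₀) ^ m • φ ^ j • p ∈ φ ^ j • C₀
  have hfix : (φ ^ period φ C₀) ^ m • C₀ = C₀ := by
    rw [← zpow_natCast, ← zpow_mul, zpow_smul_eq_iff_period_dvd]
    exact dvd_mul_right _ _
  rw [smul_smul, (((Commute.refl φ).pow_pow _ j).zpow_left m).eq, ← smul_smul]
  exact Set.smul_mem_smul_set (hfix.subset (Set.smul_mem_smul_set hp))

variable [NoetherianSpace X]

theorem period_pos_of_mem_irreducibleComponentsOf_orbitClosure
    (hC₀ : C₀ ∈ irreducibleComponentsOf (orbitClosure φ p)) : 0 < period φ C₀ := by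
  obtain ⟨i, j, hij, heq⟩ :=
    isClosed_closure.finite_irreducibleComponentsOf.exists_lt_map_eq_of_forall_mem
      (pow_smul_mem_irreducibleComponentsOf_orbitClosure hC₀)
  refine period_pos_of_fixed (n := j - i) (by omega) (smul_left_cancel (φ ^ i) ?_)
  rw [smul_smul, ← pow_add, Nat.add_sub_cancel' hij.le]
  exact heq.symm

theorem orbitClosure_subset_iUnion_pow_smul
    (hC₀ : C₀ ∈ irreducibleComponentsOf (orbitClosure φ p)) (hp : p ∈ C₀) :
    orbitClosure φ p ⊆ ⋃ i : Fin (period φ C₀), φ ^ (i : ℕ) • C₀ := by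
  rw [orbitClosure_eq_iUnion φ p (period_pos_of_mem_irreducibleComponentsOf_orbitClosure hC₀)]
  exact Set.iUnion_mono fun i => orbitClosure_pow_period_subset hC₀ hp i

theorem mem_irreducibleComponentsOf_orbitClosure_iff
    (hC₀ : C₀ ∈ irreducibleComponentsOf (orbitClosure φ p)) (hp : p ∈ C₀) {D : Set X} :
    D ∈ irreducibleComponentsOf (orbitClosure φ p) ↔ ∃ i < period φ C₀, D = φ ^ i • C₀ := by
  have hcomp := pow_smul_mem_irreducibleComponentsOf_orbitClosure hC₀
  refine ⟨fun hD => ?_, fun ⟨i, _, hi⟩ => hi ▸ hcomp i⟩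
  have hcov := Set.sUnion_range (fun i : Fin (period φ C₀) => φ ^ (i : ℕ) • C₀) ▸
    orbitClosure_subset_iUnion_pow_smul hC₀ hp
  obtain ⟨i, rfl⟩ := mem_of_mem_irreducibleComponentsOf
    (Set.finite_range fun i : Fin (period φ C₀) => φ ^ (i : ℕ) • C₀)
    (Set.forall_mem_range.2 fun i =>
      isClosed_of_mem_irreducibleComponentsOf isClosed_closure (hcomp i))
    (Set.forall_mem_range.2 fun i => (hcomp i).1) hcov hD
  exact ⟨i, i.2, rfl⟩

theorem pow_smul_eq_orbitClosure (hC₀ : C₀ ∈ irreducibleComponentsOf (orbitClosure φ p))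
    (hp : p ∈ C₀) {i : ℕ} (hi : i < period φ C₀) :
    φ ^ i • C₀ = orbitClosure (φ ^ period φ C₀) (φ ^ i • p) := by
  have hℓ := period_pos_of_mem_irreducibleComponentsOf_orbitClosure hC₀
  have hCi := pow_smul_mem_irreducibleComponentsOf_orbitClosure hC₀ i
  obtain ⟨_, ⟨j, rfl⟩, hCZ⟩ := hCi.1.1.exists_subset_of_subset_sUnion
    (Set.finite_range fun j : Fin (period φ C₀) =>
      orbitClosure (φ ^ period φ C₀) (φ ^ (j : ℕ) • p))
    (Set.forall_mem_range.2 fun _ => isClosed_closure)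
    (by rw [Set.sUnion_range, ← orbitClosure_eq_iUnion φ p hℓ]; exact hCi.1.2)
  have hCj := hCZ.trans (orbitClosure_pow_period_subset hC₀ hp j)
  have hji : (j : ℕ) = i := pow_smul_injOn_Iio_period φ C₀ j.2 hi
    ((hCi.2 (pow_smul_mem_irreducibleComponentsOf_orbitClosure hC₀ j).1 hCj).antisymm hCj)
  subst hji
  exact hCZ.antisymm (orbitClosure_pow_period_subset hC₀ hp j)

end OrbitClosure

noncomputable section ZariskiTopology

variable {k : Type*} [Field k]

local notation "k̄" => AlgebraicClosure k

-- The Zariski topology, pulled back from `Spec k̄[x,y]` along `q ↦ 𝔪_q`.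
instance : TopologicalSpace (Pt k) := .induced (pointToPoint (k := k̄)) inferInstance

instance : NoetherianSpace (Pt k) := (IsInducing.induced _).noetherianSpace

theorem preimage_pointToPoint_zeroLocus (I : Ideal (MvPolynomial (Fin 2) k̄)) :
    pointToPoint (k := k̄) ⁻¹' PrimeSpectrum.zeroLocus (I : Set (MvPolynomial (Fin 2) k̄)) =
      zeroLocus k̄ I := by
  ext q
  simp [pointToPoint, Set.subset_def]

theorem isClosed_iff_isZClosed {S : Set (Pt k)} : IsClosed S ↔ IsZClosed S := by
  rw [isClosed_induced_iff]
  constructor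
  · rintro ⟨t, ht, rfl⟩
    obtain ⟨I, rfl⟩ := (PrimeSpectrum.isClosed_iff_zeroLocus_ideal t).1 ht
    exact ⟨I, preimage_pointToPoint_zeroLocus I⟩
  · rintro ⟨I, rfl⟩
    exact ⟨_, PrimeSpectrum.isClosed_zeroLocus _, preimage_pointToPoint_zeroLocus I⟩

theorem zclos_eq_closure (Δ : Set (Pt k)) : zclos Δ = closure Δ := by
  refine (closure_minimal (zeroLocus_vanishingIdeal_le Δ)
    (isClosed_iff_isZClosed.2 ⟨_, rfl⟩)).antisymm' ?_
  obtain ⟨I, hI⟩ := isClosed_iff_isZClosed.1 (isClosed_closure (s := Δ))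
  rw [hI]
  exact zeroLocus_anti_mono (le_zeroLocus_iff_le_vanishingIdeal.1 (hI ▸ subset_closure))

theorem isIrredComponentOf_iff {C S : Set (Pt k)} :
    IsIrredComponentOf C S ↔ C ∈ irreducibleComponentsOf S := by
  have hirr : ∀ T : Set (Pt k), IsZIrreducible T ↔ IsIrreducible T := fun T => by
    simp only [IsZIrreducible, IsIrreducible, isPreirreducible_iff_isClosed_union_isClosed,
      isClosed_iff_isZClosed]
  simp only [IsIrredComponentOf, irreducibleComponentsOf, Maximal, hirr,
    and_imp, and_assoc]
  refine and_congr_right fun _ => and_congr_right fun hCS => forall_congr' fun C' => ?_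
  exact ⟨fun h hC' hC'S hCC' => (h hC' hC'S hCC').ge, fun h hC' hC'S hCC' =>
    hCC'.antisymm (h hC' hC'S hCC')⟩

theorem isClosed_setOf_eval_eq_zero (f : MvPolynomial (Fin 2) k̄) :
    IsClosed {q : Pt k | eval q f = 0} :=
  isClosed_iff_isZClosed.2 ⟨Ideal.span {f}, by simp [zeroLocus_span]⟩

theorem continuous_of_eval_eq_zero_iff {F : Pt k → Pt k}
    (L : MvPolynomial (Fin 2) k̄ → MvPolynomial (Fin 2) k̄)
    (h : ∀ q f, eval (F q) f = 0 ↔ eval q (L f) = 0) : Continuous F := by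
  refine continuous_iff_isClosed.2 fun S hS => ?_
  obtain ⟨I, rfl⟩ := isClosed_iff_isZClosed.1 hS
  have : F ⁻¹' zeroLocus k̄ I = ⋂ f ∈ I, {q | eval q (L f) = 0} := by
    ext
    simp [h]
  rw [this]
  exact isClosed_biInter fun f _ => isClosed_setOf_eval_eq_zero _

end ZariskiTopology

noncomputable section Actions

variable {k : Type*} [Field k]

local notation "k̄" => AlgebraicClosure k

theorem aeval_actp (φ : PlaneAut k) (q : Pt k) (P : MvPolynomial (Fin 2) k) :
    aeval (actp φ q) P = aeval q (φ⁻¹ P) := by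
  have : aeval (actp φ q) = (aeval q).comp φ.symm.toAlgHom := algHom_ext fun i => by simp [actp]
  exact DFunLike.congr_fun this P

instance : MulAction (PlaneAut k) (Pt k) where
  smul := actp
  one_smul q := funext fun i => by
    change aeval q ((1 : PlaneAut k)⁻¹ (X i)) = q i
    rw [inv_one, AlgEquiv.one_apply, aeval_X]
  mul_smul a b q := funext fun i => by
    change aeval q ((a * b)⁻¹ (X i)) = aeval (actp b q) (a⁻¹ (X i))
    rw [aeval_actp, mul_inv_rev, AlgEquiv.mul_apply]

theorem smul_eq_actp (φ : PlaneAut k) (q : Pt k) : φ • q = actp φ q := rfl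

theorem eval_planeAut_smul (φ : PlaneAut k) (q : Pt k) (f : MvPolynomial (Fin 2) k̄) :
    eval (φ • q) f = eval q (bind₁ (fun i => map (algebraMap k k̄) (φ⁻¹ (X i))) f) := by
  change aeval (φ • q) f = aeval q (bind₁ _ f)
  rw [aeval_bind₁]
  congr 2
  funext i
  simp [smul_eq_actp, actp, aeval_map_algebraMap]

instance : ContinuousConstSMul (PlaneAut k) (Pt k) :=
  ⟨fun φ => continuous_of_eval_eq_zero_iff _ fun q f => by rw [eval_planeAut_smul]⟩

theorem aeval_galois_smul (g : Gal(k̄/k)) (q : Pt k) (P : MvPolynomial (Fin 2) k) :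
    aeval (g • q) P = g (aeval q P) :=
  (DFunLike.congr_fun (comp_aeval q g.toAlgHom) P).symm

theorem eval_galois_smul (g : Gal(k̄/k)) (q : Pt k) (f : MvPolynomial (Fin 2) k̄) :
    eval (g • q) f = g (eval q (map (g⁻¹ : Gal(k̄/k)) f)) := by
  have : (g : k̄ →+* k̄).comp (g⁻¹ : Gal(k̄/k)) = RingHom.id k̄ :=
    RingHom.ext g.apply_symm_apply
  have h := hom_eval₂ f ((g⁻¹ : Gal(k̄/k)) : k̄ →+* k̄) (g : k̄ →+* k̄) q
  rw [this, eval₂_id] at h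
  rw [eval_map]
  exact h.symm

instance : ContinuousConstSMul Gal(k̄/k) (Pt k) :=
  ⟨fun g => continuous_of_eval_eq_zero_iff (map (g⁻¹ : Gal(k̄/k))) fun q f => by
    rw [eval_galois_smul, map_eq_zero_iff _ g.injective]⟩

instance : SMulCommClass Gal(k̄/k) (PlaneAut k) (Pt k) :=
  ⟨fun g _ q => funext fun _ => (aeval_galois_smul g q _).symm⟩

end Actions

theorem finite_range_of_forall_finite_range_apply {Γ ι α : Type*} [Finite ι] (a : Γ → ι → α)
    (h : ∀ i, (Set.range fun g => a g i).Finite) : (Set.range a).Finite :=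
  (Set.Finite.pi h).subset (Set.range_subset_iff.2 fun g _ _ => ⟨g, rfl⟩)

section GaloisOrbits

variable {F L : Type*} [Field F] [Field L] [Algebra F L]

theorem finite_range_algEquiv_apply [Algebra.IsAlgebraic F L] (x : L) :
    (Set.range fun g : Gal(L/F) => g x).Finite :=
  ((minpoly F x).rootSet_finite L).subset <| Set.range_subset_iff.2 fun g =>
    Polynomial.mem_rootSet.2 ⟨minpoly.ne_zero (Algebra.IsIntegral.isIntegral x),
      by rw [Polynomial.aeval_algHom_apply, minpoly.aeval, map_zero]⟩

theorem finite_range_map_algEquiv [Algebra.IsAlgebraic F L] {σ : Type*} (f : MvPolynomial σ L) :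
    (Set.range fun g : Gal(L/F) => map (g : L →+* L) f).Finite := by
  refine Set.Finite.of_finite_image (f := fun h (s : f.support) => coeff (s : σ →₀ ℕ) h) ?_ ?_
  · rw [← Set.range_comp]
    exact finite_range_of_forall_finite_range_apply _ fun s => by
      simpa [coeff_map] using finite_range_algEquiv_apply (F := F) (coeff (s : σ →₀ ℕ) f)
  · rintro _ ⟨g, rfl⟩ _ ⟨g', rfl⟩ h
    ext s
    by_cases hs : s ∈ f.support
    · exact congrFun h ⟨s, hs⟩
    · simp [coeff_map, notMem_support_iff.1 hs]

theorem prod_mem_range_map_algebraMap [IsGalois F L] {σ : Type*} {s : Finset (MvPolynomial σ L)}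
    (hs : ∀ g : Gal(L/F), ∀ f ∈ s, map (g : L →+* L) f ∈ s) :
    ∏ f ∈ s, f ∈ Set.range (map (algebraMap F L)) := by
  have map_inv_map : ∀ (g : Gal(L/F)) (f : MvPolynomial σ L),
      map ((g⁻¹ : Gal(L/F)) : L →+* L) (map (g : L →+* L) f) = f :=
    fun g f => by rw [map_map]; convert map_id f; exact RingHom.ext g.symm_apply_apply
  have hfix : ∀ g : Gal(L/F), map (g : L →+* L) (∏ f ∈ s, f) = ∏ f ∈ s, f := fun g => by
    rw [map_prod]
    exact Finset.prod_nbij' _ (map ((g⁻¹ : Gal(L/F)) : L →+* L)) (hs g) (hs g⁻¹)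
      (fun f _ => map_inv_map g f) (fun f _ => by simpa using map_inv_map g⁻¹ f) fun _ _ => rfl
  rw [mem_range_map_iff_coeffs_subset]
  intro c hc
  obtain ⟨m, -, rfl⟩ := mem_coeffs_iff.1 hc
  exact (InfiniteGalois.mem_range_algebraMap_iff_fixed _).2 fun g => by
    have h := congrArg (coeff m) (hfix g)
    rwa [coeff_map] at h

end GaloisOrbits

noncomputable section HatSet

variable {k : Type*} [Field k]

local notation "k̄" => AlgebraicClosure k

theorem finite_range_galois_smul (q : Pt k) : (Set.range fun g : Gal(k̄/k) => g • q).Finite :=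
  finite_range_of_forall_finite_range_apply (fun (g : Gal(k̄/k)) (i : Fin 2) => g (q i))
    fun i => finite_range_algEquiv_apply (q i)

theorem galois_smul_zeroLocus_span (g : Gal(k̄/k)) (t : Set (MvPolynomial (Fin 2) k̄)) :
    g • zeroLocus k̄ (Ideal.span t) = {x | ∀ f ∈ t, eval x (map (g : k̄ →+* k̄) f) = 0} := by
  ext x
  simp [Set.mem_smul_set_iff_inv_smul_mem, zeroLocus_span, eval_galois_smul]

theorem finite_range_galois_smul_of_isClosed {Z : Set (Pt k)} (hZ : IsClosed Z) :
    (Set.range fun g : Gal(k̄/k) => g • Z).Finite := by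
  obtain ⟨I, rfl⟩ := isClosed_iff_isZClosed.1 hZ
  obtain ⟨t, rfl⟩ := (IsNoetherian.noetherian I : I.FG)
  refine ((finite_range_of_forall_finite_range_apply
    (fun (g : Gal(k̄/k)) (f : t) => map (g : k̄ →+* k̄) (f : MvPolynomial (Fin 2) k̄))
    fun f => finite_range_map_algEquiv _).image
      fun c => {x : Pt k | ∀ f, eval x (c f) = 0}).subset ?_
  rintro _ ⟨g, rfl⟩
  refine ⟨_, ⟨g, rfl⟩, ?_⟩
  dsimp only
  rw [galois_smul_zeroLocus_span]
  ext x
  simp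

theorem isClosed_hatSet (Δ : Set (Pt k)) : IsClosed (hatSet Δ) := by
  have : hatSet Δ = ⋂ (P : MvPolynomial (Fin 2) k) (_ : ∀ x ∈ Δ, aeval x P = 0),
      {q | eval q (map (algebraMap k k̄) P) = 0} := by
    ext
    simp [hatSet, ← coe_aeval_eq_eval, aeval_map_algebraMap]
  rw [this]
  exact isClosed_biInter fun P _ => isClosed_setOf_eval_eq_zero _

theorem closure_subset_hatSet (Δ : Set (Pt k)) : closure Δ ⊆ hatSet Δ :=
  closure_minimal (fun x hx _ hP => hP x hx) (isClosed_hatSet Δ)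

theorem galois_smul_hatSet_subset (g : Gal(k̄/k)) (Δ : Set (Pt k)) :
    g • hatSet Δ ⊆ hatSet Δ := by
  rintro _ ⟨q, hq, rfl⟩ P hP
  rw [aeval_galois_smul, hq P hP, map_zero]

theorem planeAut_smul_hatSet (φ : PlaneAut k) (Δ : Set (Pt k)) :
    φ • hatSet Δ = hatSet (φ • Δ) := by
  ext q
  rw [Set.mem_smul_set_iff_inv_smul_mem]
  change (∀ P, (∀ x ∈ Δ, aeval x P = 0) → aeval (φ⁻¹ • q) P = 0) ↔
    ∀ P, (∀ x ∈ φ • Δ, aeval x P = 0) → aeval q P = 0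
  simp only [← Set.image_smul, Set.forall_mem_image, smul_eq_actp, aeval_actp, inv_inv]
  exact ⟨fun h P hP => by simpa using h (φ⁻¹ P) hP, fun h P hP => h (φ P) (by simpa using hP)⟩

theorem exists_mem_vanishingIdeal_forall_eval_ne_zero {Δ : Set (Pt k)} {q : Pt k}
    (hq : ∀ g : Gal(k̄/k), g • q ∉ zclos Δ) :
    ∃ f ∈ vanishingIdeal k̄ Δ, ∀ g : Gal(k̄/k), eval (g • q) f ≠ 0 := by
  set Q := (finite_range_galois_smul q).toFinset
  have : ¬ ((vanishingIdeal k̄ Δ : Set (MvPolynomial (Fin 2) k̄)) ⊆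
      ⋃ x ∈ (Q : Set (Pt k)), (vanishingIdeal k̄ {x} : Set (MvPolynomial (Fin 2) k̄))) := by
    rw [Ideal.subset_union_prime q q fun _ _ _ _ => inferInstance]
    rintro ⟨_, hx, hle⟩
    obtain ⟨g, rfl⟩ := (finite_range_galois_smul q).mem_toFinset.1 hx
    exact hq g fun f hf => (mem_vanishingIdeal_singleton_iff _ f).1 (hle hf)
  simpa [Set.not_subset, Q] using this

theorem hatSet_subset_iUnion_galois_smul_closure [PerfectField k] (Δ : Set (Pt k)) :
    hatSet Δ ⊆ ⋃ g : Gal(k̄/k), g • closure Δ := by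
  -- Otherwise some `f ∈ I(Δ)` vanishes at no conjugate of `q`; the product of the conjugates
  -- of `f` is defined over `k` and vanishes on `Δ`, hence at `q`: contradiction.
  intro q hq
  by_contra hq'
  simp only [Set.mem_iUnion, Set.mem_smul_set_iff_inv_smul_mem, not_exists] at hq'
  obtain ⟨f, hfΔ, hfq⟩ := exists_mem_vanishingIdeal_forall_eval_ne_zero (Δ := Δ) (q := q)
    fun g hg => hq' g⁻¹ (by rwa [inv_inv, ← zclos_eq_closure])
  set s := (finite_range_map_algEquiv (F := k) f).toFinset
  have hs : ∀ g : Gal(k̄/k), ∀ h ∈ s, map (g : k̄ →+* k̄) h ∈ s := by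
    intro g h hh
    obtain ⟨g', rfl⟩ := (Set.Finite.mem_toFinset _).1 hh
    exact (Set.Finite.mem_toFinset _).2 ⟨g * g', by rw [map_map]; rfl⟩
  obtain ⟨P, hP⟩ := prod_mem_range_map_algebraMap hs
  have hf : f ∈ s := (Set.Finite.mem_toFinset _).2 ⟨1, map_id f⟩
  have hPq : aeval q P = 0 := hq P fun x hx => by
    rw [← aeval_map_algebraMap k̄, hP, map_prod]
    exact Finset.prod_eq_zero hf (hfΔ x hx)
  rw [← aeval_map_algebraMap k̄, hP, map_prod] at hPq
  obtain ⟨_, hh, h0⟩ := Finset.prod_eq_zero_iff.1 hPq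
  obtain ⟨g, rfl⟩ := (Set.Finite.mem_toFinset _).1 hh
  exact hfq g⁻¹ <| by
    rw [eval_galois_smul, inv_inv]
    exact (map_eq_zero_iff _ g⁻¹.injective).2 h0

theorem planeAut_smul_hatSet_orbAut (φ : PlaneAut k) (p : Pt k) :
    φ • hatSet (orbAut φ p) = hatSet (orbAut φ p) := by
  rw [planeAut_smul_hatSet]
  congr 1
  have h := zpow_smul_range_zpow_smul φ p 1
  rwa [zpow_one] at h

variable [PerfectField k] {φ : PlaneAut k} {p : Pt k} {C₀ : Set (Pt k)}

theorem exists_eq_galois_smul_of_mem_irreducibleComponentsOf_hatSet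
    (hC₀ : C₀ ∈ irreducibleComponentsOf (orbitClosure φ p)) (hp : p ∈ C₀) {D : Set (Pt k)}
    (hD : D ∈ irreducibleComponentsOf (hatSet (orbAut φ p))) :
    ∃ (g : Gal(k̄/k)) (i : ℕ), i < period φ C₀ ∧ D = g • φ ^ i • C₀ := by
  have hcomp := pow_smul_mem_irreducibleComponentsOf_orbitClosure hC₀
  have hclosed : ∀ i : ℕ, IsClosed (φ ^ i • C₀) := fun i =>
    isClosed_of_mem_irreducibleComponentsOf isClosed_closure (hcomp i)
  have hcov : hatSet (orbAut φ p) ⊆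
      ⋃₀ ⋃ i : Fin (period φ C₀),
        Set.range fun g : Gal(k̄/k) => g • (φ ^ (i : ℕ) • C₀ : Set (Pt k)) := by
    intro q hq
    obtain ⟨g, hqg⟩ := Set.mem_iUnion.1 (hatSet_subset_iUnion_galois_smul_closure _ hq)
    have hq' := Set.smul_set_mono (a := g) (orbitClosure_subset_iUnion_pow_smul hC₀ hp) hqg
    rw [Set.smul_set_iUnion] at hq'
    obtain ⟨i, hqi⟩ := Set.mem_iUnion.1 hq'
    exact Set.mem_sUnion_of_mem hqi (Set.mem_iUnion.2 ⟨i, g, rfl⟩)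
  obtain ⟨i, g, rfl⟩ := Set.mem_iUnion.1 <| mem_of_mem_irreducibleComponentsOf
    (Set.finite_iUnion fun i : Fin (period φ C₀) =>
      finite_range_galois_smul_of_isClosed (hclosed i))
    (by
      simp only [Set.mem_iUnion, Set.mem_range]
      rintro _ ⟨i, g, rfl⟩
      exact (hclosed i).smul g)
    (by
      simp only [Set.mem_iUnion, Set.mem_range]
      rintro _ ⟨i, g, rfl⟩
      exact ⟨(hcomp i).1.1.image _ (continuous_const_smul g).continuousOn,
        (Set.smul_set_mono ((hcomp i).1.2.trans (closure_subset_hatSet _))).trans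
          (galois_smul_hatSet_subset g _)⟩)
    hcov hD
  exact ⟨g, i, i.2, rfl⟩

theorem period_dvd_ncard_irreducibleComponentsOf_hatSet
    (hC₀ : C₀ ∈ irreducibleComponentsOf (orbitClosure φ p)) (hp : p ∈ C₀) :
    period φ C₀ ∣ (irreducibleComponentsOf (hatSet (orbAut φ p))).ncard := by
  refine (isClosed_hatSet _).finite_irreducibleComponentsOf.dvd_ncard_of_forall_minimalPeriod_eq
    (fun D hD => planeAut_smul_hatSet_orbAut φ p ▸ smul_mem_irreducibleComponentsOf φ hD)
    (period_pos_of_mem_irreducibleComponentsOf_orbitClosure hC₀) fun D hD => ?_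
  obtain ⟨g, i, -, rfl⟩ := exists_eq_galois_smul_of_mem_irreducibleComponentsOf_hatSet hC₀ hp hD
  refine period_eq_of_forall_pow_smul_eq_iff fun n => ?_
  rw [← smul_comm g (φ ^ n), smul_smul (φ ^ n), (Commute.pow_pow_self φ n i).eq, ← smul_smul,
    smul_left_cancel_iff, smul_left_cancel_iff]

theorem exists_ncard_irreducibleComponentsOf_hatSet_eq_mul
    (hC₀ : C₀ ∈ irreducibleComponentsOf (orbitClosure φ p)) (hp : p ∈ C₀) :
    ∃ m, 0 < m ∧ (irreducibleComponentsOf (hatSet (orbAut φ p))).ncard = m * period φ C₀ := by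
  obtain ⟨m, hm⟩ := period_dvd_ncard_irreducibleComponentsOf_hatSet hC₀ hp
  obtain ⟨D, hD, -⟩ := (isClosed_hatSet (orbAut φ p)).exists_mem_irreducibleComponentsOf
    (closure_subset_hatSet _ (self_mem_orbitClosure φ p))
  have hpos := (Set.ncard_pos (isClosed_hatSet _).finite_irreducibleComponentsOf).2 ⟨D, hD⟩
  rw [hm] at hpos
  exact ⟨m, Nat.pos_of_mul_pos_left hpos, by rw [hm, mul_comm]⟩

end HatSet

theorem stmt_15_general (k : Type*) [Field k] [PerfectField k] (φ : PlaneAut k) (p : Pt k) :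
    ∃ (ℓ : ℕ) (C : ℕ → Set (Pt k)), 0 < ℓ ∧
      (∀ D : Set (Pt k), IsIrredComponentOf D (zclos (orbAut φ p)) ↔ ∃ i < ℓ, D = C i) ∧
      (∀ i < ℓ, ∀ j < ℓ, C i = C j → i = j) ∧
      p ∈ C 0 ∧
      (∀ i : ℕ, i + 1 < ℓ → actp φ '' C i = C (i + 1)) ∧
      actp φ '' C (ℓ - 1) = C 0 ∧
      (∀ i < ℓ, C i = zclos (orbAut (φ ^ ℓ) (actp (φ ^ i) p))) ∧
      (∃ m : ℕ, 0 < m ∧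
        {D : Set (Pt k) | IsIrredComponentOf D (hatSet (orbAut φ p))}.ncard = m * ℓ) ∧
      (∀ D : Set (Pt k), IsIrredComponentOf D (hatSet (orbAut φ p)) →
        ∃ (g : AlgebraicClosure k ≃ₐ[k] AlgebraicClosure k) (i : ℕ), i < ℓ ∧
          D = galAct g '' C i) := by
  obtain ⟨C₀, hC₀, hp⟩ :=
    isClosed_closure.exists_mem_irreducibleComponentsOf (self_mem_orbitClosure φ p)
  have hℓ := period_pos_of_mem_irreducibleComponentsOf_orbitClosure hC₀
  simp only [zclos_eq_closure, isIrredComponentOf_iff, Set.ofPred_mem_eq, ← smul_eq_actp,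
    Set.image_smul]
  refine ⟨period φ C₀, fun i => φ ^ i • C₀, hℓ, fun D => ?_, fun i hi j hj => ?_, ?_,
    fun i _ => ?_, ?_, fun i hi => ?_,
    exists_ncard_irreducibleComponentsOf_hatSet_eq_mul hC₀ hp, fun D hD => ?_⟩ <;>
    beta_reduce
  · exact mem_irreducibleComponentsOf_orbitClosure_iff hC₀ hp
  · exact pow_smul_injOn_Iio_period φ C₀ hi hj
  · rwa [pow_zero, one_smul]
  · rw [smul_smul, ← pow_succ']
  · rw [smul_smul, ← pow_succ', Nat.sub_add_cancel hℓ, pow_period_smul, pow_zero, one_smul]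
  · exact pow_smul_eq_orbitClosure hC₀ hp hi
  · exact exists_eq_galois_smul_of_mem_irreducibleComponentsOf_hatSet hC₀ hp hD

/-- If the Zariski closure `Δ̄` of `O_φ(p)` is infinite and not the
whole plane, then its irreducible components can be labeled `C_0, …, C_{ℓ−1}` with
`p ∈ C_0`, `φ(C_i) = C_{i+1}` cyclically, and `C_i` the Zariski closure of
`O_{φ^ℓ}(φ^i(p))`; moreover the number of irreducible components of `Δ̂` is a
(positive) multiple of `ℓ` and each of them is a Galois translate of some `C_i`. -/
theorem stmt_15 (k : Type*) [Field k] [PerfectField k] (φ : PlaneAut k) (p : Pt k)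
    (h1 : (zclos (orbAut φ p)).Infinite) (h2 : zclos (orbAut φ p) ≠ Set.univ) :
    ∃ (ℓ : ℕ) (C : ℕ → Set (Pt k)), 0 < ℓ ∧
      (∀ D : Set (Pt k), IsIrredComponentOf D (zclos (orbAut φ p)) ↔ ∃ i < ℓ, D = C i) ∧
      (∀ i < ℓ, ∀ j < ℓ, C i = C j → i = j) ∧
      p ∈ C 0 ∧
      (∀ i : ℕ, i + 1 < ℓ → actp φ '' C i = C (i + 1)) ∧
      actp φ '' C (ℓ - 1) = C 0 ∧
      (∀ i < ℓ, C i = zclos (orbAut (φ ^ ℓ) (actp (φ ^ i) p))) ∧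
      (∃ m : ℕ, 0 < m ∧
        {D : Set (Pt k) | IsIrredComponentOf D (hatSet (orbAut φ p))}.ncard = m * ℓ) ∧
      (∀ D : Set (Pt k), IsIrredComponentOf D (hatSet (orbAut φ p)) →
        ∃ (g : AlgebraicClosure k ≃ₐ[k] AlgebraicClosure k) (i : ℕ), i < ℓ ∧
          D = galAct g '' C i) :=
  stmt_15_general k φ p
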